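/- arXiv:1802.06318 — 3 statements merged into one kernel-verified Lean document; each statement's English description precedes it below -/
import Mathlib

section
/- If a distance matrix d on vertex set V satisfies the triangle inequality, then for any route (sequence of vertices) containing two visits to a pickup vertex i followed by two visits to its delivery vertex n+i in the order i → i → (n+i) → (n+i) (with possibly other vertices in between), merging the two pickups into a single pickup (at either of the two pickup positions) and the two deliveries into a single delivery (at either of the two delivery positions) yields a route whose total traveled distance is less than or equal to that of the original route. -/
/-- The total traveled distance of a route (sequence of vertices): the sum of
`d` over consecutive pairs. -/
def routeCost {V : Type*} (d : V → V → ℝ) (l : List V) : ℝ :=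
  ((l.zip l.tail).map fun p => d p.1 p.2).sum

lemma routeCost_nil {V : Type*} (d : V → V → ℝ) : routeCost d [] = 0 := by
  simp [routeCost]

lemma routeCost_single {V : Type*} (d : V → V → ℝ) (a : V) :
    routeCost d [a] = 0 := by simp [routeCost]

lemma routeCost_cons_cons {V : Type*} (d : V → V → ℝ) (a b : V) (l : List V) :
    routeCost d (a :: b :: l) = d a b + routeCost d (b :: l) := by
  simp [routeCost]

lemma routeCost_del {V : Type*} (d : V → V → ℝ)
    (hnonneg : ∀ u w, 0 ≤ d u w)
    (htri : ∀ u x w, d u w ≤ d u x + d x w)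
    (v : V) : ∀ (X Y : List V),
    routeCost d (X ++ Y) ≤ routeCost d (X ++ [v] ++ Y) := by
  intro X
  induction X with
  | nil =>
    intro Y
    cases Y with
    | nil => simp [routeCost_nil, routeCost_single]
    | cons b Y' =>
      simp only [List.nil_append, List.singleton_append, routeCost_cons_cons]
      have := hnonneg v b
      linarith
  | cons a X' ih =>
    intro Y
    cases X' with
    | nil =>
      cases Y with
      | nil =>
        simp [routeCost_single, routeCost_cons_cons, routeCost_nil, hnonneg a v]
      | cons b Y' =>
        simp only [List.cons_append, List.nil_append, List.singleton_append,
          routeCost_cons_cons]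
        have := htri a v b
        linarith
    | cons a' X'' =>
      have h := ih Y
      simp only [List.cons_append, routeCost_cons_cons] at h ⊢
      linarith

/-- If the distance matrix `d` is nonnegative and satisfies the triangle
inequality, then for any route containing two visits to a pickup vertex `p`
followed by two visits to its delivery vertex `q` in the order
`p → p → q → q` (with possibly other vertices in between), merging the two
pickups into a single pickup (kept at either of the two pickup positions) and
the two deliveries into a single delivery (kept at either of the two delivery
positions) yields a route of total distance at most that of the original. -/
theorem merge_pd_pair_not_increase {V : Type*} (d : V → V → ℝ)
    (hnonneg : ∀ u w, 0 ≤ d u w)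
    (htri : ∀ u x w, d u w ≤ d u x + d x w)
    (p q : V) (A B C D E : List V) :
    routeCost d (A ++ [p] ++ B ++ C ++ [q] ++ D ++ E)
        ≤ routeCost d (A ++ [p] ++ B ++ [p] ++ C ++ [q] ++ D ++ [q] ++ E) ∧
    routeCost d (A ++ [p] ++ B ++ C ++ D ++ [q] ++ E)
        ≤ routeCost d (A ++ [p] ++ B ++ [p] ++ C ++ [q] ++ D ++ [q] ++ E) ∧
    routeCost d (A ++ B ++ [p] ++ C ++ [q] ++ D ++ E)
        ≤ routeCost d (A ++ [p] ++ B ++ [p] ++ C ++ [q] ++ D ++ [q] ++ E) ∧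
    routeCost d (A ++ B ++ [p] ++ C ++ D ++ [q] ++ E)
        ≤ routeCost d (A ++ [p] ++ B ++ [p] ++ C ++ [q] ++ D ++ [q] ++ E) := by
  have del := routeCost_del d hnonneg htri
  refine ⟨?_, ?_, ?_, ?_⟩
  · -- keep first p, first q : delete second p, second q
    calc routeCost d (A ++ [p] ++ B ++ C ++ [q] ++ D ++ E)
        ≤ routeCost d (A ++ [p] ++ B ++ C ++ [q] ++ D ++ [q] ++ E) := by
          simpa [List.append_assoc] using
            del q (A ++ [p] ++ B ++ C ++ [q] ++ D) E
      _ ≤ routeCost d (A ++ [p] ++ B ++ [p] ++ C ++ [q] ++ D ++ [q] ++ E) := by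
          simpa [List.append_assoc] using
            del p (A ++ [p] ++ B) (C ++ [q] ++ D ++ [q] ++ E)
  · -- keep first p, second q
    calc routeCost d (A ++ [p] ++ B ++ C ++ D ++ [q] ++ E)
        ≤ routeCost d (A ++ [p] ++ B ++ C ++ [q] ++ D ++ [q] ++ E) := by
          simpa [List.append_assoc] using
            del q (A ++ [p] ++ B ++ C) (D ++ [q] ++ E)
      _ ≤ routeCost d (A ++ [p] ++ B ++ [p] ++ C ++ [q] ++ D ++ [q] ++ E) := by
          simpa [List.append_assoc] using
            del p (A ++ [p] ++ B) (C ++ [q] ++ D ++ [q] ++ E)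
  · -- keep second p, first q
    calc routeCost d (A ++ B ++ [p] ++ C ++ [q] ++ D ++ E)
        ≤ routeCost d (A ++ B ++ [p] ++ C ++ [q] ++ D ++ [q] ++ E) := by
          simpa [List.append_assoc] using
            del q (A ++ B ++ [p] ++ C ++ [q] ++ D) E
      _ ≤ routeCost d (A ++ [p] ++ B ++ [p] ++ C ++ [q] ++ D ++ [q] ++ E) := by
          simpa [List.append_assoc] using
            del p A (B ++ [p] ++ C ++ [q] ++ D ++ [q] ++ E)
  · -- keep second p, second q
    calc routeCost d (A ++ B ++ [p] ++ C ++ D ++ [q] ++ E)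
        ≤ routeCost d (A ++ B ++ [p] ++ C ++ [q] ++ D ++ [q] ++ E) := by
          simpa [List.append_assoc] using
            del q (A ++ B ++ [p] ++ C) (D ++ [q] ++ E)
      _ ≤ routeCost d (A ++ [p] ++ B ++ [p] ++ C ++ [q] ++ D ++ [q] ++ E) := by
          simpa [List.append_assoc] using
            del p A (B ++ [p] ++ C ++ [q] ++ D ++ [q] ++ E)
end

section
/- For every n ≥ 1 there exists an instance of the single-vehicle pickup-and-delivery problem with split loads with exactly two pickup-delivery pairs, vehicle capacity Q = n, demands q_1 = n − 1 and q_2 = n, in which every feasible route servicing all demand makes at least n visits to the pickup vertex of pair 2, provided the entire demand q_1 must be onboard during all services of pair 2 (i.e., the vehicle loads all of pair 1 first and delivers it last). -/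
/-- For every `n ≥ 1` there is an instance of the single-vehicle PDP with split
loads with two p-d pairs, capacity `Q = n`, demands `q₁ = n - 1` and `q₂ = n`,
such that any feasible servicing of pair 2 — given that the whole demand `q₁`
of pair 1 is onboard during all services of pair 2 — requires at least `n`
visits to the pickup vertex of pair 2. A servicing of pair 2 is a list of
positive integer amounts loaded at successive visits to pickup 2, each
respecting the capacity (`q₁ + amount ≤ Q`), whose total equals `q₂`. -/
theorem split_instance_many_visits :
    ∀ n : ℕ, 1 ≤ n →
      ∃ Q q₁ q₂ : ℕ, Q = n ∧ q₁ = n - 1 ∧ q₂ = n ∧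
        ∀ amounts : List ℕ,
          (∀ a ∈ amounts, 1 ≤ a) →
          (∀ a ∈ amounts, q₁ + a ≤ Q) →
          amounts.sum = q₂ →
          n ≤ amounts.length := by
  intro n hn
  refine ⟨n, n - 1, n, rfl, rfl, rfl, ?_⟩
  intro amounts h1 hcap hsum
  have hle : ∀ a ∈ amounts, a ≤ 1 := by
    intro a ha
    have := hcap a ha
    omega
  calc n = amounts.sum := hsum.symm
    _ ≤ amounts.length * 1 := List.sum_le_card_nsmul amounts 1 hle
    _ = amounts.length := by ring
end

section
/- In the label propagation for the RCSP-insertion neighborhood, the dominance relation defined by 's dominates s′ iff s.dist ≤ s′.dist and min(s.load, q_x) ≥ min(s′.load, q_x)' is a preorder (reflexive and transitive) on labels, and eliminating dominated labels preserves at least one optimal label: for any target load threshold t ≤ q_x, the minimum distance among labels with load ≥ t is unchanged after removing dominated labels. -/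
/-- The dominance relation on labels `(dist, load)`: `s` dominates `s'` iff
`s.dist ≤ s'.dist` and `min(s.load, q_x) ≥ min(s'.load, q_x)`. -/
def Dominates (qx : ℝ) (s s' : ℝ × ℝ) : Prop :=
  s.1 ≤ s'.1 ∧ min s'.2 qx ≤ min s.2 qx

/-- The dominance relation is a preorder (reflexive and transitive), and
eliminating dominated labels preserves at least one optimal label: if
`S' ⊆ S` is such that every label of `S` is dominated by some label of `S'`,
then for any target load threshold `t ≤ q_x`, the minimum distance among
labels with load at least `t` is unchanged (every label of `S` reaching the
threshold is matched in `S'` with no larger distance). -/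
theorem dominance_preorder_and_optimal_preserved (qx : ℝ) (hqx : 0 < qx) :
    (∀ s : ℝ × ℝ, Dominates qx s s) ∧
    (∀ s s' s'' : ℝ × ℝ, Dominates qx s s' → Dominates qx s' s'' →
      Dominates qx s s'') ∧
    (∀ S S' : Finset (ℝ × ℝ), S' ⊆ S →
      (∀ s ∈ S, ∃ s' ∈ S', Dominates qx s' s) →
      ∀ t : ℝ, t ≤ qx → ∀ s ∈ S, t ≤ s.2 →
        ∃ s' ∈ S', t ≤ s'.2 ∧ s'.1 ≤ s.1) := by
  refine ⟨fun s => ⟨le_refl _, le_refl _⟩,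
    fun s s' s'' h1 h2 => ⟨h1.1.trans h2.1, h2.2.trans h1.2⟩,
    fun S S' hsub hdom t ht s hs hts => ?_⟩
  obtain ⟨s', hs', hd⟩ := hdom s hs
  refine ⟨s', hs', ?_, hd.1⟩
  have : t ≤ min s.2 qx := le_min hts ht
  exact le_trans (this.trans hd.2) (min_le_left _ _)
end
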